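/- Assume n > 2 and k*·n < m. Then every N-scoring rule (with these scores) is regret-free truth-telling. -/
import Mathlib


open Function

/-- A preference: a bijection from positions (`0` = bottom/worst, `m-1` = top/best)
to alternatives.  `p k` is the alternative in the `(k+1)`-th position from the bottom. -/
abbrev Pref (m : ℕ) := Equiv.Perm (Fin m)

/-- A profile: one preference for each of the `n` agents. -/
abbrev Profile (n m : ℕ) := Fin n → Pref m

/-- `x` is strictly preferred to `y` under `p`. -/
def prefers {m : ℕ} (p : Pref m) (x y : Fin m) : Prop :=
  p.symm y < p.symm x

instance {m : ℕ} (p : Pref m) (x y : Fin m) : Decidable (prefers p x y) :=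
  inferInstanceAs (Decidable (p.symm y < p.symm x))

/-- `x` is the top (best) alternative of `p`. -/
def IsBest {m : ℕ} (p : Pref m) (x : Fin m) : Prop :=
  ∀ y, p.symm y ≤ p.symm x

instance {m : ℕ} (p : Pref m) (x : Fin m) : Decidable (IsBest p x) :=
  inferInstanceAs (Decidable (∀ y, p.symm y ≤ p.symm x))

/-- Regret-free truth-telling: whenever a misreport `Pi'` by agent `i` yields a strictly
better outcome, there is a subprofile of the others (a full profile `Pstar` agreeing with
`P` at `i`) consistent with the observed outcome at which the misreport does strictly worse. -/
def RFTT {n m : ℕ} (f : Profile n m → Fin m) : Prop :=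
  ∀ (i : Fin n) (P : Profile n m) (Pi' : Pref m),
    prefers (P i) (f (update P i Pi')) (f P) →
    ∃ Pstar : Profile n m, Pstar i = P i ∧ f Pstar = f P ∧
      prefers (P i) (f Pstar) (f (update Pstar i Pi'))

/-- Strategy-proofness: truth-telling yields a weakly better outcome. -/
def StrategyProof {n m : ℕ} (f : Profile n m → Fin m) : Prop :=
  ∀ (P : Profile n m) (i : Fin n) (Pi' : Pref m),
    f P = f (update P i Pi') ∨ prefers (P i) (f P) (f (update P i Pi'))

/-- Tops-only: the outcome only depends on the agents' top alternatives. -/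
def TopsOnly {n m : ℕ} (f : Profile n m → Fin m) : Prop :=
  ∀ P P' : Profile n m, (∀ i x, IsBest (P i) x ↔ IsBest (P' i) x) → f P = f P'

/-- Efficiency: no alternative is strictly preferred to the outcome by every agent. -/
def Efficient {n m : ℕ} (f : Profile n m → Fin m) : Prop :=
  ∀ P : Profile n m, ¬ ∃ y, ∀ i, prefers (P i) y (f P)

/-- Dictatorship: some agent always gets his top alternative. -/
def Dictatorial {n m : ℕ} (f : Profile n m → Fin m) : Prop :=
  ∃ i : Fin n, ∀ P : Profile n m, IsBest (P i) (f P)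

/-- Anonymity: invariance under permutations of the agents. -/
def Anonymous {n m : ℕ} (f : Profile n m → Fin m) : Prop :=
  ∀ (P : Profile n m) (σ : Equiv.Perm (Fin n)), f P = f (fun i => P (σ i))

/-- Neutrality: relabelling the alternatives relabels the outcome accordingly. -/
def Neutral {n m : ℕ} (f : Profile n m → Fin m) : Prop :=
  ∀ (P : Profile n m) (π : Equiv.Perm (Fin m)),
    π (f P) = f (fun i => (P i).trans π)

/-- The minimal position (`0`-indexed, from the bottom) of alternative `x` in profile `P`. -/
noncomputable def minpos {n m : ℕ} (P : Profile n m) (x : Fin m) : ℕ :=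
  ⨅ i : Fin n, ((P i).symm x : ℕ)

/-- The maxmin winners of profile `P`. -/
def MaxminSet {n m : ℕ} (P : Profile n m) : Set (Fin m) :=
  {x | ∀ y, minpos P y ≤ minpos P x}

/-- An `A`-maxmin rule: breaks ties among maxmin winners by a fixed strict linear order. -/
def AMaxmin {n m : ℕ} (f : Profile n m → Fin m) : Prop :=
  ∃ r : Fin m → Fin m → Prop, IsStrictTotalOrder (Fin m) r ∧
    ∀ P : Profile n m, f P ∈ MaxminSet P ∧ ∀ y ∈ MaxminSet P, y ≠ f P → r (f P) y

/-- An `N`-maxmin rule: breaks ties among maxmin winners by a fixed agent's preference. -/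
def NMaxmin {n m : ℕ} (f : Profile n m → Fin m) : Prop :=
  ∃ i : Fin n, ∀ P : Profile n m,
    f P ∈ MaxminSet P ∧ ∀ y ∈ MaxminSet P, y ≠ f P → prefers (P i) (f P) y

/-- The score of alternative `x` in profile `P`, for scores `s` (indexed by position
from the bottom). -/
noncomputable def score {n m : ℕ} (s : Fin m → ℝ) (P : Profile n m) (x : Fin m) : ℝ :=
  ∑ i : Fin n, s ((P i).symm x)

/-- The scoring winners of profile `P`. -/
def ScoreSet {n m : ℕ} (s : Fin m → ℝ) (P : Profile n m) : Set (Fin m) :=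
  {x | ∀ y, score s P y ≤ score s P x}

/-- An `A`-scoring rule: breaks ties among scoring winners by a fixed strict linear order. -/
def AScoring {n m : ℕ} (s : Fin m → ℝ) (f : Profile n m → Fin m) : Prop :=
  ∃ r : Fin m → Fin m → Prop, IsStrictTotalOrder (Fin m) r ∧
    ∀ P : Profile n m, f P ∈ ScoreSet s P ∧ ∀ y ∈ ScoreSet s P, y ≠ f P → r (f P) y

/-- An `N`-scoring rule: breaks ties among scoring winners by a fixed agent's preference. -/
def NScoring {n m : ℕ} (s : Fin m → ℝ) (f : Profile n m → Fin m) : Prop :=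
  ∃ i : Fin n, ∀ P : Profile n m,
    f P ∈ ScoreSet s P ∧ ∀ y ∈ ScoreSet s P, y ≠ f P → prefers (P i) (f P) y

/-- The number of agents preferring `a` to `b` in profile `P`. -/
def numPref {n m : ℕ} (P : Profile n m) (a b : Fin m) : ℕ :=
  (Finset.univ.filter fun i => prefers (P i) a b).card

/-- `a` is a Condorcet winner at `P`. -/
def CondorcetWinner {n m : ℕ} (P : Profile n m) (a : Fin m) : Prop :=
  ∀ b, b ≠ a → numPref P b a < numPref P a b

/-- Condorcet consistency: the rule picks the Condorcet winner whenever one exists. -/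
def CondorcetConsistent {n m : ℕ} (f : Profile n m → Fin m) : Prop :=
  ∀ (P : Profile n m) (a : Fin m), CondorcetWinner P a → f P = a

/-- `p'` is a monotonic transformation of `p` with respect to `a`: all positions up to
(and including) the position of `a` are unchanged. -/
def MonoTransf {m : ℕ} (p p' : Pref m) (a : Fin m) : Prop :=
  ∀ k : Fin m, k ≤ p.symm a → p k = p' k

/-- Monotonicity: an alternative ranked below the outcome by agent `i` cannot become
the outcome after a monotonic transformation of `i`'s preference w.r.t. the outcome. -/
def MonotoneRule {n m : ℕ} (f : Profile n m → Fin m) : Prop :=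
  ∀ (P : Profile n m) (i : Fin n) (b : Fin m), prefers (P i) (f P) b →
    ∀ Pi' : Pref m, MonoTransf (P i) Pi' (f P) → f (update P i Pi') ≠ b

/-- One pairwise majority contest: the challenger `y` beats the incumbent `c` only if
strictly more agents prefer `y` to `c` (ties go to the incumbent, who always comes
earlier in the fixed order). -/
def duel {n m : ℕ} (P : Profile n m) (c y : Fin m) : Fin m :=
  if numPref P c y < numPref P y c then y else c

/-- Run successive pairwise contests starting from incumbent `c` against the listed
challengers in order. -/
def seRun {n m : ℕ} (P : Profile n m) : Fin m → List (Fin m) → Fin m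
  | c, [] => c
  | c, y :: rest => seRun P (duel P c y) rest

/-- The survivor of successive elimination along a list of alternatives (none if empty). -/
def seWinner? {n m : ℕ} (P : Profile n m) : List (Fin m) → Option (Fin m)
  | [] => none
  | c :: rest => some (seRun P c rest)

/-- A successive elimination rule: there is an enumeration `e 0 ≻ e 1 ≻ ⋯ ≻ e (m-1)` of the
alternatives such that the rule outputs the survivor of the sequential pairwise majority
contests (ties resolved in favour of the `≻`-greater, i.e. earlier, alternative). -/
def SuccElim {n m : ℕ} (f : Profile n m → Fin m) : Prop :=
  ∃ e : Fin m ≃ Fin m, ∀ P : Profile n m,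
    seWinner? P ((List.finRange m).map e) = some (f P)

section Aux11

variable {n m : ℕ}

/-- There is an alternative everyone ranks in position `≥ K`. -/
lemma top_exists_11 {K : ℕ} (hKn : K * n < m) (P : Profile n m) :
    ∃ x : Fin m, ∀ i, K ≤ ((P i).symm x).val := by
  by_contra h
  push_neg at h
  have hsub : (Finset.univ : Finset (Fin m)) ⊆
      Finset.univ.biUnion (fun i : Fin n =>
        Finset.univ.filter fun x : Fin m => ((P i).symm x).val < K) := by
    intro x _
    obtain ⟨i, hi⟩ := h x
    exact Finset.mem_biUnion.2 ⟨i, Finset.mem_univ i, by simp [hi]⟩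
  have hb : ∀ i : Fin n,
      (Finset.univ.filter fun x : Fin m => ((P i).symm x).val < K).card ≤ K := by
    intro i
    have := Finset.card_le_card_of_injOn (f := fun x : Fin m => ((P i).symm x).val)
      (s := Finset.univ.filter fun x : Fin m => ((P i).symm x).val < K)
      (t := Finset.range K)
      (by intro x hx; simp at hx ⊢; exact hx)
      (by intro x _ y _ hxy; exact (P i).symm.injective (Fin.ext hxy))
    simpa using this
  have hcard := Finset.card_le_card hsub
  have hbig := Finset.card_biUnion_le (s := (Finset.univ : Finset (Fin n)))
      (t := fun i : Fin n => Finset.univ.filter fun x : Fin m => ((P i).symm x).val < K)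
  have hsum : ∑ i : Fin n, (Finset.univ.filter fun x : Fin m => ((P i).symm x).val < K).card
      ≤ ∑ _i : Fin n, K := Finset.sum_le_sum (fun i _ => hb i)
  simp at hsum
  have : m ≤ n * K := by
    calc m = (Finset.univ : Finset (Fin m)).card := by simp
    _ ≤ _ := hcard
    _ ≤ _ := hbig
    _ ≤ n * K := hsum
  rw [Nat.mul_comm K n] at hKn
  omega

lemma score_le_11 (hm : 2 ≤ m) (s : Fin m → ℝ) (hmono : Monotone s)
    (P : Profile n m) (x : Fin m) :
    score s P x ≤ n * s ⟨m - 1, by omega⟩ := by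
  have : ∀ i : Fin n, s ((P i).symm x) ≤ s ⟨m - 1, by omega⟩ := by
    intro i
    exact hmono (by simp [Fin.le_def]; omega)
  calc score s P x ≤ ∑ _i : Fin n, s ⟨m - 1, by omega⟩ :=
        Finset.sum_le_sum (fun i _ => this i)
    _ = n * s ⟨m - 1, by omega⟩ := by simp [mul_comm]

lemma scoreSet_iff_11 (hm : 2 ≤ m) (s : Fin m → ℝ) (hmono : Monotone s)
    (K : ℕ) (hK1 : 1 ≤ K) (hKm : K ≤ m - 1)
    (hKlt : s ⟨K - 1, by omega⟩ < s ⟨K, by omega⟩)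
    (hKconst : ∀ j : Fin m, K ≤ (j : ℕ) → s j = s ⟨m - 1, by omega⟩)
    (hKn : K * n < m) (P : Profile n m) (x : Fin m) :
    x ∈ ScoreSet s P ↔ ∀ i, K ≤ ((P i).symm x).val := by
  have htopval : ∀ (y : Fin m), (∀ i, K ≤ ((P i).symm y).val) →
      score s P y = n * s ⟨m - 1, by omega⟩ := by
    intro y hy
    unfold score
    calc ∑ i : Fin n, s ((P i).symm y) = ∑ _i : Fin n, s ⟨m - 1, by omega⟩ :=
          Finset.sum_congr rfl (fun i _ => hKconst _ (hy i))
      _ = _ := by simp [mul_comm]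
  have hlowval : ∀ (y : Fin m), (∃ i, ((P i).symm y).val < K) →
      score s P y < n * s ⟨m - 1, by omega⟩ := by
    intro y ⟨i, hi⟩
    have hlt : s ((P i).symm y) < s ⟨m - 1, by omega⟩ := by
      have h1 : s ((P i).symm y) ≤ s ⟨K - 1, by omega⟩ :=
        hmono (by simp [Fin.le_def]; omega)
      have h2 : s ⟨K, by omega⟩ = s ⟨m - 1, by omega⟩ := hKconst _ (by simp)
      linarith
    have hle : ∀ j : Fin n, s ((P j).symm y) ≤ s ⟨m - 1, by omega⟩ :=
      fun j => hmono (by simp [Fin.le_def]; omega)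
    have := Finset.sum_lt_sum (s := (Finset.univ : Finset (Fin n)))
      (f := fun j => s ((P j).symm y)) (g := fun _ => s ⟨m - 1, by omega⟩)
      (fun j _ => hle j) ⟨i, Finset.mem_univ i, hlt⟩
    calc score s P y = ∑ j : Fin n, s ((P j).symm y) := rfl
      _ < ∑ _j : Fin n, s ⟨m - 1, by omega⟩ := this
      _ = _ := by simp [mul_comm]
  obtain ⟨t, ht⟩ := top_exists_11 hKn P
  constructor
  · intro hx
    by_contra h
    push_neg at h
    have h1 := hlowval x h
    have h2 := htopval t ht
    have := hx t
    unfold ScoreSet at hx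
    simp only [Set.mem_setOf_eq] at hx
    have := hx t
    rw [h2] at this
    linarith
  · intro hx y
    have := htopval x hx
    rw [show score s P x = n * s ⟨m - 1, by omega⟩ from this]
    exact score_le_11 hm s hmono P y

end Aux11

/-- Assume n > 2 and k*·n < m. Then every N-scoring rule (with these
scores) is regret-free truth-telling.  Here `K` is the (1-indexed) value k*. -/
theorem stmt_11 (n m : ℕ) (hn : 2 < n) (hm : 2 ≤ m) (s : Fin m → ℝ)
    (hmono : Monotone s) (K : ℕ) (hK1 : 1 ≤ K) (hKm : K ≤ m - 1)
    (hKlt : s ⟨K - 1, by omega⟩ < s ⟨K, by omega⟩)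
    (hKconst : ∀ j : Fin m, K ≤ (j : ℕ) → s j = s ⟨m - 1, by omega⟩)
    (hKn : K * n < m)
    (f : Profile n m → Fin m) (hf : NScoring s f) :
    RFTT f := by
  obtain ⟨i0, hspec⟩ := hf
  have h3K : 3 * K < m := by
    calc 3 * K = K * 3 := by ring
      _ ≤ K * n := Nat.mul_le_mul_left K hn
      _ < m := hKn
  have hKm3 : K + 3 ≤ m := by omega
  have hchar : ∀ (Q : Profile n m) (x : Fin m),
      x ∈ ScoreSet s Q ↔ ∀ i, K ≤ ((Q i).symm x).val :=
    fun Q x => scoreSet_iff_11 hm s hmono K hK1 hKm hKlt hKconst hKn Q x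
  intro i P Pi' hpref
  have haS : f P ∈ ScoreSet s P := (hspec P).1
  have haT : ∀ j, K ≤ ((P j).symm (f P)).val := (hchar P (f P)).1 haS
  have hbS : f (update P i Pi') ∈ ScoreSet s (update P i Pi') := (hspec _).1
  have hbT : ∀ j, K ≤ (((update P i Pi') j).symm (f (update P i Pi'))).val :=
    (hchar _ _).1 hbS
  have hne : f (update P i Pi') ≠ f P := by
    intro h
    rw [h] at hpref
    exact lt_irrefl _ hpref
  by_cases hii : i0 = i
  · -- the manipulation is impossible: contradiction
    exfalso
    subst hii
    by_cases hbK : K ≤ ((P i0).symm (f (update P i0 Pi'))).val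
    · have hbSP : f (update P i0 Pi') ∈ ScoreSet s P := by
        rw [hchar]
        intro j
        by_cases hj : j = i0
        · subst hj; exact hbK
        · have := hbT j; rwa [update_of_ne hj] at this
      have h1 := (hspec P).2 _ hbSP hne
      exact lt_asymm hpref h1
    · push_neg at hbK
      have h1 := haT i0
      have h2 : ((P i0).symm (f P)).val < ((P i0).symm (f (update P i0 Pi'))).val :=
        hpref
      omega
  · -- real case: construct the counterfactual profile
    have hc : ∃ c : Fin m, ((P i).symm c).val < K ∧ K ≤ (Pi'.symm c).val := by
      by_contra h
      push_neg at h
      -- h : ∀ c, ((P i).symm c).val < K → (Pi'.symm c).val < K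
      have key : ∀ σ : Equiv.Perm (Fin m),
          (Finset.univ.filter fun c : Fin m => (σ.symm c).val < K) =
          (Finset.univ.filter fun k : Fin m => k.val < K).image σ := by
        intro σ
        ext x
        simp only [Finset.mem_filter, Finset.mem_univ, true_and, Finset.mem_image]
        constructor
        · intro hx; exact ⟨σ.symm x, hx, σ.apply_symm_apply x⟩
        · rintro ⟨k, hk, rfl⟩; simpa using hk
      have hsub : (Finset.univ.filter fun c : Fin m => ((P i).symm c).val < K) ⊆
          (Finset.univ.filter fun c : Fin m => (Pi'.symm c).val < K) := by
        intro x hx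
        simp only [Finset.mem_filter, Finset.mem_univ, true_and] at hx ⊢
        exact h x hx
      have hcards : (Finset.univ.filter fun c : Fin m => (Pi'.symm c).val < K).card ≤
          (Finset.univ.filter fun c : Fin m => ((P i).symm c).val < K).card := by
        rw [key (P i), key Pi', Finset.card_image_of_injective _ (P i).injective,
          Finset.card_image_of_injective _ Pi'.injective]
      have heq := Finset.eq_of_subset_of_card_le hsub hcards
      -- hence the two "bottom" sets agree, so ScoreSets agree; outcomes agree
      have hiff : ∀ x : Fin m, (((P i).symm x).val < K ↔ (Pi'.symm x).val < K) := by
        intro x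
        constructor
        · intro hx
          have : x ∈ (Finset.univ.filter fun c : Fin m => ((P i).symm c).val < K) := by
            simp [hx]
          rw [heq] at this
          simpa using this
        · intro hx
          have : x ∈ (Finset.univ.filter fun c : Fin m => (Pi'.symm c).val < K) := by
            simp [hx]
          rw [← heq] at this
          simpa using this
      have hbSP : f (update P i Pi') ∈ ScoreSet s P := by
        rw [hchar]
        intro j
        by_cases hj : j = i
        · subst hj
          have h1 := hbT j
          rw [update_self] at h1
          by_contra hcon
          push_neg at hcon
          have := (hiff (f (update P j Pi'))).1 hcon
          omega
        · have := hbT j; rwa [update_of_ne hj] at this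
      have haSU : f P ∈ ScoreSet s (update P i Pi') := by
        rw [hchar]
        intro j
        by_cases hj : j = i
        · subst hj
          rw [update_self]
          have h1 := haT j
          by_contra hcon
          push_neg at hcon
          have := (hiff (f P)).2 hcon
          omega
        · rw [update_of_ne hj]; exact haT j
      have h1 := (hspec P).2 _ hbSP hne
      have h2 := (hspec (update P i Pi')).2 _ haSU (Ne.symm hne)
      rw [update_of_ne hii] at h2
      exact lt_asymm h1 h2
    obtain ⟨c, hc1, hc2⟩ := hc
    have hac : f P ≠ c := by
      intro h
      have := haT i
      rw [h] at this
      omega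
    have hm1 : m - 1 < m := by omega
    have hm2 : m - 2 < m := by omega
    set pm1 : Fin m := ⟨m - 1, hm1⟩ with hpm1
    set pm2 : Fin m := ⟨m - 2, hm2⟩ with hpm2
    have hpm12 : pm2 ≠ pm1 := by simp [hpm1, hpm2, Fin.ext_iff]; omega
    set σ1 : Equiv.Perm (Fin m) := Equiv.swap (f P) pm2 with hσ1
    set σ : Equiv.Perm (Fin m) := σ1.trans (Equiv.swap (σ1 c) pm1) with hσ
    have hσ1a : σ1 (f P) = pm2 := Equiv.swap_apply_left _ _
    have hσ1c : σ1 c ≠ pm2 := by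
      rw [← hσ1a]
      exact fun h => hac (σ1.injective h).symm
    have hσa : σ (f P) = pm2 := by
      rw [hσ]
      simp only [Equiv.trans_apply, hσ1a]
      exact Equiv.swap_apply_of_ne_of_ne (Ne.symm hσ1c) hpm12
    have hσc : σ c = pm1 := by
      rw [hσ]
      simp only [Equiv.trans_apply]
      exact Equiv.swap_apply_left _ _
    set q : Pref m := σ.symm with hq
    have hqsymm : q.symm = σ := rfl
    set Pstar : Profile n m := update (fun _ => q) i (P i) with hPstar
    have hPstari : Pstar i = P i := update_self ..
    have hPstarj : ∀ j, j ≠ i → Pstar j = q := fun j hj => update_of_ne hj ..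
    -- f Pstar = f P
    have haSstar : f P ∈ ScoreSet s Pstar := by
      rw [hchar]
      intro j
      by_cases hj : j = i
      · subst hj; rw [hPstari]; exact haT j
      · rw [hPstarj j hj, hqsymm, hσa]; show K ≤ m - 2; omega
    have hfPstar : f Pstar = f P := by
      by_contra hne'
      have hp := (hspec Pstar).2 _ haSstar (Ne.symm hne')
      rw [hPstarj i0 hii] at hp
      have hval : (σ (f P)).val < (σ (f Pstar)).val := hp
      rw [hσa] at hval
      have hval' : m - 2 < (σ (f Pstar)).val := hval
      have hlt : (σ (f Pstar)).val < m := (σ (f Pstar)).isLt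
      have : σ (f Pstar) = pm1 := by
        apply Fin.ext
        show (σ (f Pstar)).val = m - 1
        omega
      have hfc : f Pstar = c := σ.injective (this.trans hσc.symm)
      have hfS := (hchar Pstar (f Pstar)).1 (hspec Pstar).1 i
      rw [hPstari, hfc] at hfS
      omega
    -- f (update Pstar i Pi') = c
    have hcSQ : c ∈ ScoreSet s (update Pstar i Pi') := by
      rw [hchar]
      intro j
      by_cases hj : j = i
      · subst hj; rw [update_self]; exact hc2
      · rw [update_of_ne hj, hPstarj j hj, hqsymm, hσc]; show K ≤ m - 1; omega
    have hfQ : f (update Pstar i Pi') = c := by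
      by_contra hne'
      have hp := (hspec (update Pstar i Pi')).2 _ hcSQ (Ne.symm hne')
      rw [update_of_ne hii, hPstarj i0 hii] at hp
      have hval : (σ c).val < (σ (f (update Pstar i Pi'))).val := hp
      rw [hσc] at hval
      have hval' : m - 1 < (σ (f (update Pstar i Pi'))).val := hval
      have hlt : (σ (f (update Pstar i Pi'))).val < m := (σ _).isLt
      omega
    refine ⟨Pstar, hPstari, hfPstar, ?_⟩
    rw [hfPstar, hfQ]
    show (P i).symm c < (P i).symm (f P)
    have := haT i
    simp only [Fin.lt_def]
    omega
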